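/- arXiv:2205.04867 — 2 statements merged into one kernel-verified Lean document; each statement's English description precedes it below -/
import Mathlib

section
/- Let 0 < q < 1, let n ≥ 1 be an integer, and let a, b be nonzero real numbers such that a·q^j ≠ 1 and b·q^j ≠ 1 for all integers j ≥ 1. Then for all x > 0 with x·q^k ≠ 1 for all integers k ≥ 0, the q-derivative at x of the function G(x) := ( a·b·q²·(1−q) / ((1−aq)(1−bq)) ) · ( (x/(bq); q)_∞·(x/(aq); q)_∞ / (x; q)_∞ ) · p_{n−1}(x; aq, bq; q) equals ( (x/b; q)_∞·(x/a; q)_∞ / (x; q)_∞ ) · p_n(x; a, b; q). (This is the indefinite q-integral ∫ w(x;a,b;q)·p_n(x;a,b;q) d_q x = (abq²(1−q)/((1−aq)(1−bq)))·w(x;aq,bq;q)·p_{n−1}(x;aq,bq;q).) -/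
/-- The Jackson `q`-derivative `(D_q f)(x) = (f(x) - f(qx)) / ((1-q)x)`. -/
noncomputable def qDeriv (q : ℝ) (f : ℝ → ℝ) (x : ℝ) : ℝ :=
  (f x - f (q * x)) / ((1 - q) * x)

/-- The finite q-shifted factorial `(z; q)_k`. -/
noncomputable def qPoch (z q : ℝ) (k : ℕ) : ℝ :=
  ∏ j ∈ Finset.range k, (1 - z * q ^ j)

/-- The infinite q-shifted factorial `(z; q)_∞`. -/
noncomputable def qPochInf (z q : ℝ) : ℝ :=
  ∏' j : ℕ, (1 - z * q ^ j)

/-- The big q-Laguerre polynomial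
`p_n(x; a, b; q) = Σ_{k=0}^n (q^{−n};q)_k (x;q)_k q^k / ((q;q)_k (aq;q)_k (bq;q)_k)`. -/
noncomputable def bigQLaguerre (q a b : ℝ) (n : ℕ) (x : ℝ) : ℝ :=
  ∑ k ∈ Finset.range (n + 1),
    (qPoch ((q : ℝ) ^ (-(n : ℤ))) q k * qPoch x q k * q ^ k) /
      (qPoch q q k * qPoch (a * q) q k * qPoch (b * q) q k)

/-!
Since `(x; q)_∞ = (1 - x) (qx; q)_∞`, the weights `w(x; aq, bq)`, `w(qx; aq, bq)` and `w(x; a, b)`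
are rational multiples of one another, and the claim reduces to the contiguous relation
`(aq - x)(bq - x) p_{n-1}(x; aq, bq) - abq² (1 - x) p_{n-1}(qx; aq, bq) = (1 - aq)(1 - bq) x p_n(x; a, b)`.
Expanding both polynomials in the basis `(x; q)_k`, with `(1 - x)(qx; q)_k = (x; q)_{k+1}`, the
`k`-th summand of the difference of the two sides is `W_{k-1} - W_k` (`W_{-1} = 0`) with
`W_k = d_k x (x; q)_{k+1} / q^k`, where `d_k` are the coefficients of `p_{n-1}(x; aq, bq)`; this
follows from the ratios of consecutive coefficients. The sum telescopes to `-W_n`, which vanishes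
because `d_n` contains the factor `(q^{1-n}; q)_n = 0`.
-/
open Finset

lemma qPoch_succ (z q : ℝ) (k : ℕ) : qPoch z q (k + 1) = qPoch z q k * (1 - z * q ^ k) :=
  prod_range_succ _ k

lemma qPoch_succ' (z q : ℝ) (k : ℕ) : qPoch z q (k + 1) = (1 - z) * qPoch (z * q) q k := by
  rw [qPoch, prod_range_succ', mul_comm]
  simp only [qPoch, pow_succ', pow_zero, mul_one, mul_assoc]

lemma qPoch_zpow_neg_self {q : ℝ} (hq : q ≠ 0) (n : ℕ) :
    qPoch (q ^ (-(n : ℤ))) q (n + 1) = 0 := by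
  rw [qPoch_succ, ← zpow_natCast, ← zpow_add₀ hq]
  simp

lemma qPochInf_eq_one_sub_mul {q : ℝ} (hq : 0 ≤ q) (hq1 : q < 1) (z : ℝ) :
    qPochInf z q = (1 - z) * qPochInf (z * q) q := by
  have hsum : Summable fun j : ℕ => -(z * q * q ^ j) :=
    ((summable_geometric_of_lt_one hq hq1).mul_left (z * q)).neg
  rw [qPochInf, tprod_eq_zero_mul' ((Real.multipliable_one_add_of_summable hsum).congr
    fun j => by ring)]
  simp only [qPochInf, pow_zero, mul_one, pow_succ, mul_assoc, mul_comm q]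

/-- The `k`-th coefficient of `₃φ₂(s, 0, x; aq, bq; q, q)` in the basis `(x; q)_k`. -/
noncomputable def phi32Coeff (q s a b : ℝ) (k : ℕ) : ℝ :=
  qPoch s q k * q ^ k / (qPoch q q k * qPoch (a * q) q k * qPoch (b * q) q k)

noncomputable def phi32PartialSum (q s a b : ℝ) (N : ℕ) (x : ℝ) : ℝ :=
  ∑ k ∈ range N, phi32Coeff q s a b k * qPoch x q k

lemma bigQLaguerre_eq_phi32PartialSum (q a b : ℝ) (n : ℕ) (x : ℝ) :
    bigQLaguerre q a b n x = phi32PartialSum q (q ^ (-(n : ℤ))) a b (n + 1) x :=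
  sum_congr rfl fun k _ => by rw [phi32Coeff]; ring

lemma phi32Coeff_succ (q s a b : ℝ) (k : ℕ) :
    phi32Coeff q s a b (k + 1) = phi32Coeff q s a b k * ((1 - s * q ^ k) * q /
      ((1 - q ^ (k + 1)) * (1 - a * q ^ (k + 1)) * (1 - b * q ^ (k + 1)))) := by
  simp only [phi32Coeff, qPoch_succ, pow_succ, div_eq_mul_inv, mul_inv]
  ring

lemma phi32Coeff_succ_eq_shift (q s a b : ℝ) (k : ℕ) :
    phi32Coeff q s a b (k + 1) = phi32Coeff q (s * q) (a * q) (b * q) k *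
      ((1 - s) * q / ((1 - q ^ (k + 1)) * (1 - a * q) * (1 - b * q))) := by
  simp only [phi32Coeff, qPoch_succ' s, qPoch_succ' (a * q), qPoch_succ' (b * q), qPoch_succ q,
    pow_succ, div_eq_mul_inv, mul_inv]
  ring

lemma phi32Coeff_succ_mul {q s a b : ℝ} {k : ℕ} (hq : q ^ (k + 1) ≠ 1)
    (ha : a * q ^ (k + 1) ≠ 1) (hb : b * q ^ (k + 1) ≠ 1) :
    (1 - q ^ (k + 1)) * (1 - a * q ^ (k + 1)) * (1 - b * q ^ (k + 1)) * phi32Coeff q s a b (k + 1)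
      = (1 - s * q ^ k) * q * phi32Coeff q s a b k := by
  have h : (1 - q ^ (k + 1)) * (1 - a * q ^ (k + 1)) * (1 - b * q ^ (k + 1)) ≠ 0 := by
    simp only [ne_eq, mul_eq_zero, sub_eq_zero, not_or]
    exact ⟨⟨hq.symm, ha.symm⟩, hb.symm⟩
  rw [phi32Coeff_succ, mul_left_comm, mul_div_cancel₀ _ h, mul_comm]

lemma phi32Coeff_succ_mul_shift {q s a b : ℝ} {k : ℕ} (hq : q ^ (k + 1) ≠ 1)
    (ha : a * q ≠ 1) (hb : b * q ≠ 1) :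
    (1 - q ^ (k + 1)) * (1 - a * q) * (1 - b * q) * phi32Coeff q s a b (k + 1)
      = (1 - s) * q * phi32Coeff q (s * q) (a * q) (b * q) k := by
  have h : (1 - q ^ (k + 1)) * (1 - a * q) * (1 - b * q) ≠ 0 := by
    simp only [ne_eq, mul_eq_zero, sub_eq_zero, not_or]
    exact ⟨⟨hq.symm, ha.symm⟩, hb.symm⟩
  rw [phi32Coeff_succ_eq_shift, mul_left_comm, mul_div_cancel₀ _ h, mul_comm]

lemma phi32_contiguous_term_succ {q s a b x : ℝ} {k : ℕ} (hq0 : q ≠ 0) (hq : q ^ (k + 1) ≠ 1)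
    (ha : a * q ≠ 1) (hb : b * q ≠ 1) (hak : a * q * q ^ (k + 1) ≠ 1)
    (hbk : b * q * q ^ (k + 1) ≠ 1) :
    (a * q - x) * (b * q - x) *
        (phi32Coeff q (s * q) (a * q) (b * q) (k + 1) * qPoch x q (k + 1))
      - a * b * q ^ 2 * (phi32Coeff q (s * q) (a * q) (b * q) (k + 1) * qPoch x q (k + 2))
      - (1 - a * q) * (1 - b * q) * x * (phi32Coeff q s a b (k + 1) * qPoch x q (k + 1))
    = phi32Coeff q (s * q) (a * q) (b * q) k * x * qPoch x q (k + 1) / q ^ k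
      - phi32Coeff q (s * q) (a * q) (b * q) (k + 1) * x * qPoch x q (k + 2) / q ^ (k + 1) := by
  set c := phi32Coeff q s a b
  set d := phi32Coeff q (s * q) (a * q) (b * q)
  have hd := phi32Coeff_succ_mul (s := s * q) hq hak hbk
  have hc := phi32Coeff_succ_mul_shift (s := s) hq ha hb
  have key : (1 - q ^ (k + 1)) *
      (x * (1 - a * q * q ^ (k + 1)) * (1 - b * q * q ^ (k + 1)) * d (k + 1)
        - q ^ (k + 1) * x * (1 - a * q) * (1 - b * q) * c (k + 1) - q * x * d k) = 0 := by
    linear_combination x * hd - q ^ (k + 1) * x * hc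
  have hE := (mul_eq_zero.mp key).resolve_left (sub_ne_zero.mpr hq.symm)
  rw [← sub_eq_zero]
  calc _ = qPoch x q (k + 1) / q ^ (k + 1) * (x * (1 - a * q * q ^ (k + 1)) *
          (1 - b * q * q ^ (k + 1)) * d (k + 1) - q ^ (k + 1) * x * (1 - a * q) * (1 - b * q) *
          c (k + 1) - q * x * d k) := by
        rw [qPoch_succ x q (k + 1)]
        field_simp
        ring
    _ = 0 := by rw [hE, mul_zero]

lemma phi32PartialSum_contiguous {q s a b : ℝ} (hq0 : q ≠ 0) (hq : ∀ j : ℕ, 1 ≤ j → q ^ j ≠ 1)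
    (ha : ∀ j : ℕ, 1 ≤ j → a * q ^ j ≠ 1) (hb : ∀ j : ℕ, 1 ≤ j → b * q ^ j ≠ 1) (N : ℕ) (x : ℝ) :
    (a * q - x) * (b * q - x) * phi32PartialSum q (s * q) (a * q) (b * q) (N + 1) x
      - a * b * q ^ 2 * ((1 - x) * phi32PartialSum q (s * q) (a * q) (b * q) (N + 1) (q * x))
      - (1 - a * q) * (1 - b * q) * x * phi32PartialSum q s a b (N + 1) x
    = -(phi32Coeff q (s * q) (a * q) (b * q) N * x * qPoch x q (N + 1) / q ^ N) := by
  have hshift : ∀ j : ℕ, ∀ c : ℝ, (∀ j : ℕ, 1 ≤ j → c * q ^ j ≠ 1) → c * q * q ^ (j + 1) ≠ 1 :=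
    fun j c hc => by simpa only [pow_succ' q (j + 1), mul_assoc] using hc (j + 2) (by omega)
  simp only [phi32PartialSum, mul_sum, ← sum_sub_distrib, mul_comm q x, mul_left_comm (1 - x),
    ← qPoch_succ']
  rw [sum_range_succ', sum_congr rfl fun k _ =>
    phi32_contiguous_term_succ hq0 (hq (k + 1) (by omega)) (by simpa using ha 1 le_rfl)
      (by simpa using hb 1 le_rfl) (hshift k a ha) (hshift k b hb), sum_range_sub']
  simp [phi32Coeff, qPoch]
  ring

lemma phi32PartialSum_zpow_neg_succ {q : ℝ} (hq : q ≠ 0) (a b : ℝ) (n : ℕ) (x : ℝ) :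
    phi32PartialSum q (q ^ (-(n : ℤ))) a b (n + 2) x
      = phi32PartialSum q (q ^ (-(n : ℤ))) a b (n + 1) x := by
  rw [phi32PartialSum, sum_range_succ, phi32Coeff, qPoch_zpow_neg_self hq, zero_mul, zero_div,
    zero_mul, add_zero, phi32PartialSum]

lemma bigQLaguerre_contiguous {q a b : ℝ} (hq0 : q ≠ 0) (hq : ∀ j : ℕ, 1 ≤ j → q ^ j ≠ 1)
    (ha : ∀ j : ℕ, 1 ≤ j → a * q ^ j ≠ 1) (hb : ∀ j : ℕ, 1 ≤ j → b * q ^ j ≠ 1) (m : ℕ) (x : ℝ) :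
    (a * q - x) * (b * q - x) * bigQLaguerre q (a * q) (b * q) m x
      - a * b * q ^ 2 * ((1 - x) * bigQLaguerre q (a * q) (b * q) m (q * x))
    = (1 - a * q) * (1 - b * q) * (x * bigQLaguerre q a b (m + 1) x) := by
  have hs : q ^ (-(m : ℤ)) = q ^ (-((m + 1 : ℕ) : ℤ)) * q := by
    rw [← zpow_add_one₀ hq0]
    congr 1
    push_cast
    ring
  have h := phi32PartialSum_contiguous (s := q ^ (-((m + 1 : ℕ) : ℤ))) hq0 hq ha hb (m + 1) x
  rw [← hs, phi32Coeff, qPoch_zpow_neg_self hq0] at h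
  simp only [bigQLaguerre_eq_phi32PartialSum, ← phi32PartialSum_zpow_neg_succ hq0 _ _ m]
  linear_combination h

lemma qPochInf_div_mul {q : ℝ} (hq0 : 0 < q) (hq1 : q < 1) (x c : ℝ) :
    qPochInf (x / (c * q)) q = (1 - x / (c * q)) * qPochInf (x / c) q := by
  rw [qPochInf_eq_one_sub_mul hq0.le hq1, div_mul_eq_div_div, div_mul_cancel₀ _ hq0.ne']

noncomputable def bigQLaguerreWeight (q a b x : ℝ) : ℝ :=
  qPochInf (x / b) q * qPochInf (x / a) q / qPochInf x q

lemma bigQLaguerreWeight_shift {q a b : ℝ} (hq0 : 0 < q) (hq1 : q < 1) (ha : a ≠ 0) (hb : b ≠ 0)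
    (x : ℝ) :
    bigQLaguerreWeight q (a * q) (b * q) x
      = (a * q - x) * (b * q - x) / (a * b * q ^ 2) * bigQLaguerreWeight q a b x := by
  rw [bigQLaguerreWeight, bigQLaguerreWeight, qPochInf_div_mul hq0 hq1, qPochInf_div_mul hq0 hq1]
  field_simp

lemma bigQLaguerreWeight_shift_apply_mul {q a b x : ℝ} (hq0 : 0 < q) (hq1 : q < 1)
    (hx : x ≠ 1) :
    bigQLaguerreWeight q (a * q) (b * q) (q * x) = (1 - x) * bigQLaguerreWeight q a b x := by
  rw [bigQLaguerreWeight, bigQLaguerreWeight, qPochInf_eq_one_sub_mul hq0.le hq1 x, mul_comm b,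
    mul_comm a, mul_div_mul_left _ _ hq0.ne', mul_div_mul_left _ _ hq0.ne', mul_comm q x]
  field_simp [sub_ne_zero.mpr hx.symm]

/-- Indefinite q-integral of the weighted big q-Laguerre polynomial. -/
theorem qIntegral_bigQLaguerre (q a b : ℝ) (hq : 0 < q) (hq1 : q < 1)
    (n : ℕ) (hn : 1 ≤ n) (ha0 : a ≠ 0) (hb0 : b ≠ 0)
    (ha : ∀ j : ℕ, 1 ≤ j → a * q ^ j ≠ 1) (hb : ∀ j : ℕ, 1 ≤ j → b * q ^ j ≠ 1) :
    ∀ x : ℝ, 0 < x → (∀ k : ℕ, x * q ^ k ≠ 1) →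
      qDeriv q
        (fun t => (a * b * q ^ 2 * (1 - q) / ((1 - a * q) * (1 - b * q))) *
          (qPochInf (t / (b * q)) q * qPochInf (t / (a * q)) q / qPochInf t q) *
          bigQLaguerre q (a * q) (b * q) (n - 1) t) x
      = (qPochInf (x / b) q * qPochInf (x / a) q / qPochInf x q) *
          bigQLaguerre q a b n x := by
  intro x hx hxq
  obtain ⟨m, rfl⟩ := Nat.exists_eq_add_of_le' hn
  have hqj : ∀ j : ℕ, 1 ≤ j → q ^ j ≠ 1 := fun j hj => (pow_lt_one₀ hq.le hq1 (by omega)).ne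
  have hcontig := bigQLaguerre_contiguous hq.ne' hqj ha hb m x
  have hx1 : x ≠ 1 := by simpa using hxq 0
  have haq : 1 - a * q ≠ 0 := sub_ne_zero.mpr (by simpa using (ha 1 le_rfl).symm)
  have hbq : 1 - b * q ≠ 0 := sub_ne_zero.mpr (by simpa using (hb 1 le_rfl).symm)
  have h1q : 1 - q ≠ 0 := sub_ne_zero.mpr hq1.ne'
  have hD : (1 - a * q) * (1 - b * q) * x ≠ 0 := mul_ne_zero (mul_ne_zero haq hbq) hx.ne'
  rw [Nat.add_sub_cancel]
  change qDeriv q (fun t => _ * bigQLaguerreWeight q (a * q) (b * q) t * _) x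
    = bigQLaguerreWeight q a b x * _
  rw [qDeriv, bigQLaguerreWeight_shift hq hq1 ha0 hb0,
    bigQLaguerreWeight_shift_apply_mul hq hq1 hx1]
  calc _ = bigQLaguerreWeight q a b x *
        (((a * q - x) * (b * q - x) * bigQLaguerre q (a * q) (b * q) m x
          - a * b * q ^ 2 * ((1 - x) * bigQLaguerre q (a * q) (b * q) m (q * x)))
          / ((1 - a * q) * (1 - b * q) * x)) := by
        field_simp
    _ = _ := by rw [hcontig, ← mul_assoc, mul_div_cancel_left₀ _ hD]
end

section
/- Let 0 < q < 1, let n ≥ 1 be an integer, let α > −1 be real, and let m ≥ 0 be real. Then for all x > 0, the q-derivative at x of the function G(x) := ( x^{m+α+1} / (−x; q)_∞ ) · ( ((1−q^m)/x)·L_n^{α}(x/q; q) + q^{α}·L_{n−1}^{α+1}(x; q) ) equals ( x^{m+α} / (−x; q)_∞ ) · ( (1−q^{m+α})·[m]_q/x + q^{m+α}·([n]_q − [m]_q) ) · L_n^{α}(x; q). -/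
/-- The q-bracket `[m]_q = (1 - q^m)/(1 - q)` for a real `m` (rpow). -/
noncomputable def qBracket (q m : ℝ) : ℝ := (1 - q ^ m) / (1 - q)

/-- The q-Laguerre polynomial
`L_n^α(x;q) = (1/(q;q)_n) Σ_{k=0}^n (q^{−n};q)_k (−x;q)_k / (q;q)_k · q^{(n+α+1)k}`. -/
noncomputable def qLaguerre (q α : ℝ) (n : ℕ) (x : ℝ) : ℝ :=
  (1 / qPoch q q n) * ∑ k ∈ Finset.range (n + 1),
    (qPoch ((q : ℝ) ^ (-(n : ℤ))) q k * qPoch (-x) q k / qPoch q q k) *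
      q ^ (((n : ℝ) + α + 1) * (k : ℝ))


/-! The ₂φ₁ sums defining the q-Laguerre polynomials, compared term by term, give the two
contiguous relations
  `L_{n+1}^α(x/q) = L_{n+1}^α(x) - q^α x L_n^{α+1}(x)`,
  `(1 - q^{n+1}) L_{n+1}^α(x) = L_n^{α+1}(x) - q^{α+1} (1 + x) L_n^{α+1}(qx)`.
Together with `(-x; q)_∞ = (1 + x) (-qx; q)_∞` they express both `G(x)` and `G(qx)` through
`L_{n+1}^α(x)` and `L_n^{α+1}(x)` alone, and the `L_n^{α+1}(x)` terms cancel in `G(x) - G(qx)`. -/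

open Finset

lemma qPoch_zero (z q : ℝ) : qPoch z q 0 = 1 := prod_range_zero _

lemma one_sub_mul_pow_ne_zero {q : ℝ} (hq : 0 ≤ q) (hq1 : q ≠ 1) (k : ℕ) :
    1 - q * q ^ k ≠ 0 := by
  rw [← pow_succ', sub_ne_zero, ne_comm, Ne, pow_eq_one_iff_of_nonneg hq k.succ_ne_zero]
  exact hq1

lemma qPoch_inv_pow_self_succ {q : ℝ} (hq : q ≠ 0) (n : ℕ) :
    qPoch (q ^ n)⁻¹ q (n + 1) = 0 :=
  prod_eq_zero (self_mem_range_succ n) (by field_simp; ring)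

noncomputable def qLaguerreTerm (q α : ℝ) (n : ℕ) (x : ℝ) (k : ℕ) : ℝ :=
  qPoch (q ^ (-(n : ℤ))) q k * qPoch (-x) q k / qPoch q q k *
    q ^ (((n : ℝ) + α + 1) * (k : ℝ))

lemma qLaguerre_eq_sum (q α : ℝ) (n : ℕ) (x : ℝ) :
    qLaguerre q α n x = 1 / qPoch q q n * ∑ k ∈ range (n + 1), qLaguerreTerm q α n x k := rfl

lemma qLaguerreTerm_zero (q α : ℝ) (n : ℕ) (x : ℝ) : qLaguerreTerm q α n x 0 = 1 := by
  simp [qLaguerreTerm, qPoch_zero]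

lemma qLaguerreTerm_eq {q : ℝ} (hq : 0 < q) (α : ℝ) (n : ℕ) (x : ℝ) (k : ℕ) :
    qLaguerreTerm q α n x k =
      qPoch (q ^ n)⁻¹ q k * qPoch (-x) q k / qPoch q q k * (q ^ n * q ^ α * q) ^ k := by
  rw [qLaguerreTerm, zpow_neg, zpow_natCast, Real.rpow_mul hq.le, Real.rpow_natCast,
    Real.rpow_add hq, Real.rpow_add hq, Real.rpow_natCast, Real.rpow_one]

lemma qLaguerreTerm_self_succ {q : ℝ} (hq : 0 < q) (α : ℝ) (n : ℕ) (x : ℝ) :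
    qLaguerreTerm q α n x (n + 1) = 0 := by
  rw [qLaguerreTerm_eq hq, qPoch_inv_pow_self_succ hq.ne', zero_mul, zero_div, zero_mul]

lemma qLaguerreTerm_succ_div {q : ℝ} (hq : 0 < q) (hq1 : q ≠ 1) (α : ℝ) (n : ℕ) (x : ℝ)
    (k : ℕ) :
    qLaguerreTerm q α (n + 1) (x / q) (k + 1) = qLaguerreTerm q α (n + 1) x (k + 1) -
      q ^ α * x * (1 - q ^ (n + 1)) * qLaguerreTerm q (α + 1) n x k := by
  have hk := one_sub_mul_pow_ne_zero hq.le hq1 k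
  simp only [qLaguerreTerm_eq hq, Real.rpow_add hq α, Real.rpow_one]
  rw [qPoch_succ' (q ^ (n + 1))⁻¹, qPoch_succ' (-(x / q)), qPoch_succ (-x), qPoch_succ q q,
    show (q ^ (n + 1))⁻¹ * q = (q ^ n)⁻¹ by field_simp; ring,
    show -(x / q) * q = -x by field_simp]
  field_simp
  ring

lemma qLaguerreTerm_succ_succ {q : ℝ} (hq : 0 < q) (hq1 : q ≠ 1) (α : ℝ) (n : ℕ) (x : ℝ)
    (k : ℕ) :
    qLaguerreTerm q α (n + 1) x (k + 1) = qLaguerreTerm q (α + 1) n x (k + 1) -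
      q ^ (α + 1) * (1 + x) * qLaguerreTerm q (α + 1) n (q * x) k := by
  have hk := one_sub_mul_pow_ne_zero hq.le hq1 k
  simp only [qLaguerreTerm_eq hq, Real.rpow_add hq α, Real.rpow_one]
  rw [qPoch_succ' (q ^ (n + 1))⁻¹, qPoch_succ (q ^ n)⁻¹, qPoch_succ' (-x), qPoch_succ q q,
    show (q ^ (n + 1))⁻¹ * q = (q ^ n)⁻¹ by field_simp; ring, show -x * q = -(q * x) by ring]
  field_simp
  ring

lemma qLaguerre_succ_div {q : ℝ} (hq : 0 < q) (hq1 : q ≠ 1) (α : ℝ) (n : ℕ) (x : ℝ) :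
    qLaguerre q α (n + 1) (x / q) =
      qLaguerre q α (n + 1) x - q ^ α * x * qLaguerre q (α + 1) n x := by
  have hn := one_sub_mul_pow_ne_zero hq.le hq1 n
  simp only [qLaguerre_eq_sum]
  rw [sum_range_succ' _ (n + 1), sum_range_succ' _ (n + 1)]
  simp only [qLaguerreTerm_succ_div hq hq1, sum_sub_distrib, ← mul_sum, qLaguerreTerm_zero,
    qPoch_succ q q n]
  field_simp
  ring

lemma one_sub_pow_mul_qLaguerre_succ {q : ℝ} (hq : 0 < q) (hq1 : q ≠ 1) (α : ℝ) (n : ℕ)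
    (x : ℝ) :
    (1 - q ^ (n + 1)) * qLaguerre q α (n + 1) x =
      qLaguerre q (α + 1) n x - q ^ (α + 1) * (1 + x) * qLaguerre q (α + 1) n (q * x) := by
  have hn := one_sub_mul_pow_ne_zero hq.le hq1 n
  have hshift : ∑ k ∈ range (n + 1), qLaguerreTerm q (α + 1) n x k =
      ∑ k ∈ range (n + 1), qLaguerreTerm q (α + 1) n x (k + 1) + 1 := by
    rw [sum_range_succ (fun k => qLaguerreTerm q (α + 1) n x (k + 1)),
      qLaguerreTerm_self_succ hq, add_zero, sum_range_succ', qLaguerreTerm_zero]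
  simp only [qLaguerre_eq_sum]
  rw [sum_range_succ' _ (n + 1), hshift]
  simp only [qLaguerreTerm_succ_succ hq hq1, sum_sub_distrib, ← mul_sum, qLaguerreTerm_zero,
    qPoch_succ q q n]
  field_simp
  ring

lemma multipliable_one_add_mul_pow {q : ℝ} (hq : |q| < 1) (z : ℝ) :
    Multipliable fun j : ℕ => 1 + z * q ^ j :=
  Real.multipliable_one_add_of_summable (f := fun j : ℕ => z * q ^ j)
    ((summable_geometric_of_abs_lt_one hq).mul_left z)

lemma qPochInf_eq_mul {q : ℝ} (hq : |q| < 1) (z : ℝ) :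
    qPochInf z q = (1 - z) * qPochInf (z * q) q := by
  have hmul : Multipliable fun j : ℕ => 1 - z * q ^ (j + 1) := by
    simpa only [neg_mul, ← sub_eq_add_neg, pow_succ', mul_assoc] using
      multipliable_one_add_mul_pow hq (-(z * q))
  unfold qPochInf
  rw [tprod_eq_zero_mul' (f := fun j : ℕ => 1 - z * q ^ j) hmul, pow_zero, mul_one]
  simp only [pow_succ', mul_assoc]

noncomputable def qLaguerreAntideriv (q α m : ℝ) (n : ℕ) (t : ℝ) : ℝ :=
  t ^ (m + α + 1) / qPochInf (-t) q *
    ((1 - q ^ m) / t * qLaguerre q α n (t / q) + q ^ α * qLaguerre q (α + 1) (n - 1) t)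

lemma qLaguerreAntideriv_succ_apply {q : ℝ} (hq : 0 < q) (hq1 : q ≠ 1) (α m : ℝ) (n : ℕ)
    {x : ℝ} (hx : x ≠ 0) :
    qLaguerreAntideriv q α m (n + 1) x = x ^ (m + α) / qPochInf (-x) q *
      ((1 - q ^ m) * qLaguerre q α (n + 1) x + q ^ (m + α) * x * qLaguerre q (α + 1) n x) := by
  rw [qLaguerreAntideriv, Nat.add_sub_cancel, qLaguerre_succ_div hq hq1, Real.rpow_add_one hx,
    Real.rpow_add hq]
  field_simp
  ring

lemma qLaguerreAntideriv_succ_apply_mul {q : ℝ} (hq : 0 < q) (hq1 : q < 1) (α m : ℝ) (n : ℕ)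
    {x : ℝ} (hx : 0 < x) :
    qLaguerreAntideriv q α m (n + 1) (q * x) = q ^ (m + α) * x ^ (m + α) / qPochInf (-x) q *
      ((1 - q ^ m) * (1 + x) * qLaguerre q α (n + 1) x +
        x * (qLaguerre q (α + 1) n x - (1 - q ^ (n + 1)) * qLaguerre q α (n + 1) x)) := by
  have hP : qPochInf (-x) q = (1 + x) * qPochInf (-(q * x)) q := by
    rw [qPochInf_eq_mul (abs_lt.2 ⟨by linarith, hq1⟩), neg_mul, mul_comm x q, sub_neg_eq_add]
  have hL : qLaguerre q (α + 1) n x - (1 - q ^ (n + 1)) * qLaguerre q α (n + 1) x =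
      q ^ (α + 1) * (1 + x) * qLaguerre q (α + 1) n (q * x) := by
    rw [one_sub_pow_mul_qLaguerre_succ hq hq1.ne]
    ring
  rw [qLaguerreAntideriv, Nat.add_sub_cancel, hP, mul_div_cancel_left₀ x hq.ne', hL,
    Real.mul_rpow hq.le hx.le, Real.rpow_add_one hx.ne', Real.rpow_add_one hq.ne',
    Real.rpow_add_one hq.ne', Real.rpow_add hq]
  field_simp

theorem qIntegral_qLaguerre_general (q α m : ℝ) (hq : 0 < q) (hq1 : q < 1)
    (n : ℕ) (hn : 1 ≤ n) :
    ∀ x : ℝ, 0 < x →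
      qDeriv q
        (fun t => t ^ (m + α + 1) / qPochInf (-t) q *
          ((1 - q ^ m) / t * qLaguerre q α n (t / q)
            + q ^ α * qLaguerre q (α + 1) (n - 1) t)) x
      = x ^ (m + α) / qPochInf (-x) q *
          ((1 - q ^ (m + α)) * qBracket q m / x
            + q ^ (m + α) * (qBracket q (n : ℝ) - qBracket q m)) *
          qLaguerre q α n x := by
  intro x hx
  obtain ⟨n, rfl⟩ := Nat.exists_eq_add_of_le' hn
  change qDeriv q (qLaguerreAntideriv q α m (n + 1)) x = _
  rw [qDeriv, qLaguerreAntideriv_succ_apply hq hq1.ne α m n hx.ne',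
    qLaguerreAntideriv_succ_apply_mul hq hq1 α m n hx, qBracket, qBracket, Real.rpow_natCast]
  field_simp
  ring

/-- Indefinite q-integral for q-Laguerre polynomials. -/
theorem qIntegral_qLaguerre (q α m : ℝ) (hq : 0 < q) (hq1 : q < 1)
    (n : ℕ) (hn : 1 ≤ n) (hα : -1 < α) (hm : 0 ≤ m) :
    ∀ x : ℝ, 0 < x →
      qDeriv q
        (fun t => t ^ (m + α + 1) / qPochInf (-t) q *
          ((1 - q ^ m) / t * qLaguerre q α n (t / q)
            + q ^ α * qLaguerre q (α + 1) (n - 1) t)) x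
      = x ^ (m + α) / qPochInf (-x) q *
          ((1 - q ^ (m + α)) * qBracket q m / x
            + q ^ (m + α) * (qBracket q (n : ℝ) - qBracket q m)) *
          qLaguerre q α n x :=
  qIntegral_qLaguerre_general q α m hq hq1 n hn
end
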